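/- arXiv:2001.04629 — 2 statements merged into one kernel-verified Lean document; each statement's English description precedes it below -/
import Mathlib

section
/- Let t_1 < t_2 < ⋯ < t_{g+1} be real numbers. Suppose ℙ(T ≥ t_1) = 1, ℙ(T ≥ t_s) > 0 for every s ∈ {1, …, g}, and ℙ(t_s < T < t_{s+1}) = 0 for every s ∈ {1, …, g}. Then the survival probability admits the Kaplan–Meier product decomposition ℙ(T ≥ t_{g+1}) = ∏_{s=1}^{g} (1 − ℙ(T = t_s)/ℙ(T ≥ t_s)). -/
/-! Since `T` has no mass strictly between `t s` and `t (s + 1)`, the survival function splits as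
`ℙ(T ≥ t s) = ℙ(T = t s) + ℙ(T ≥ t (s + 1))`; hence each factor `1 - ℙ(T = t s) / ℙ(T ≥ t s)` equals
`ℙ(T ≥ t (s + 1)) / ℙ(T ≥ t s)` and the product telescopes to `ℙ(T ≥ t (g + 1)) / ℙ(T ≥ t 1)`. -/

open MeasureTheory Set

lemma measure_le_eq_measure_eq_add_measure_le {Ω : Type*} [MeasurableSpace Ω] {μ : Measure Ω}
    {T : Ω → ℝ} (hT : Measurable T) {a b : ℝ} (hab : a < b)
    (hgap : μ {ω | a < T ω ∧ T ω < b} = 0) :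
    μ {ω | a ≤ T ω} = μ {ω | T ω = a} + μ {ω | b ≤ T ω} := by
  have hgt : Ioo a b ∪ Ici b = Ioi a := Ioo_union_Ici_eq_Ioi hab
  have hsplit : T ⁻¹' Ici a = T ⁻¹' {a} ∪ (T ⁻¹' Ioo a b ∪ T ⁻¹' Ici b) := by
    rw [← preimage_union, ← preimage_union, hgt, singleton_union, Ioi_insert]
  have hdisj_gap : Disjoint (T ⁻¹' Ioo a b) (T ⁻¹' Ici b) :=
    (disjoint_left.2 fun _ hx hx' => (mem_Ici.1 hx').not_gt hx.2).preimage T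
  have hdisj_atom : Disjoint (T ⁻¹' {a}) (T ⁻¹' Ioo a b ∪ T ⁻¹' Ici b) := by
    rw [← preimage_union, hgt]
    exact (disjoint_singleton_left.2 (lt_irrefl a)).preimage T
  change μ (T ⁻¹' Ici a) = μ (T ⁻¹' {a}) + μ (T ⁻¹' Ici b)
  rw [hsplit, measure_union hdisj_atom ((hT measurableSet_Ioo).union (hT measurableSet_Ici)),
    measure_union hdisj_gap (hT measurableSet_Ici)]
  simp only [preimage, mem_Ioo, hgap, zero_add]

lemma eq_mul_prod_one_sub_div_of_eq_add {S d : ℕ → ℝ} {g : ℕ}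
    (hS : ∀ s, 1 ≤ s → s ≤ g → S s ≠ 0)
    (hstep : ∀ s, 1 ≤ s → s ≤ g → S s = d s + S (s + 1)) :
    S (g + 1) = S 1 * ∏ s ∈ Finset.Icc 1 g, (1 - d s / S s) := by
  induction g with
  | zero => simp
  | succ g ih =>
    have hS' := hS (g + 1) (by omega) le_rfl
    rw [Finset.prod_Icc_succ_top (by omega), ← mul_assoc,
      ← ih (fun s h1 h2 => hS s h1 (by omega)) (fun s h1 h2 => hstep s h1 (by omega)),
      mul_one_sub, mul_div_cancel₀ _ hS', hstep (g + 1) (by omega) le_rfl]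
    ring

theorem kaplan_meier_product_general {Ω : Type*} [MeasurableSpace Ω] (μ : Measure Ω)
    (T : Ω → ℝ) (hT : Measurable T)
    (g : ℕ) (t : ℕ → ℝ)
    (hmono : ∀ s, 1 ≤ s → s ≤ g → t s < t (s + 1))
    (h1 : μ {ω | t 1 ≤ T ω} = 1)
    (hpos : ∀ s, 1 ≤ s → s ≤ g → 0 < (μ {ω | t s ≤ T ω}).toReal)
    (hgap : ∀ s, 1 ≤ s → s ≤ g → μ {ω | t s < T ω ∧ T ω < t (s + 1)} = 0) :
    (μ {ω | t (g + 1) ≤ T ω}).toReal =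
      ∏ s ∈ Finset.Icc 1 g,
        (1 - (μ {ω | T ω = t s}).toReal / (μ {ω | t s ≤ T ω}).toReal) := by
  have hstep : ∀ s, 1 ≤ s → s ≤ g → (μ {ω | t s ≤ T ω}).toReal =
      (μ {ω | T ω = t s}).toReal + (μ {ω | t (s + 1) ≤ T ω}).toReal := by
    intro s hs1 hsg
    have hsplit := measure_le_eq_measure_eq_add_measure_le hT (hmono s hs1 hsg) (hgap s hs1 hsg)
    -- `ENNReal.toReal ⊤ = 0`, so `hpos` also excludes infinite mass
    have hfin : μ {ω | T ω = t s} + μ {ω | t (s + 1) ≤ T ω} ≠ ⊤ :=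
      hsplit ▸ (ENNReal.toReal_pos_iff.1 (hpos s hs1 hsg)).2.ne
    rw [hsplit, ENNReal.toReal_add (ENNReal.add_ne_top.1 hfin).1 (ENNReal.add_ne_top.1 hfin).2]
  rw [eq_mul_prod_one_sub_div_of_eq_add (fun s hs1 hsg => (hpos s hs1 hsg).ne') hstep, h1,
    ENNReal.toReal_one, one_mul]

/-- Kaplan–Meier product decomposition: if `t 1 < t 2 < ⋯ < t (g+1)`,
`ℙ(T ≥ t 1) = 1`, `ℙ(T ≥ t s) > 0` for `1 ≤ s ≤ g`, and `T` almost surely takes no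
value strictly between consecutive time-points, then
`ℙ(T ≥ t (g+1)) = ∏_{s=1}^{g} (1 − ℙ(T = t s)/ℙ(T ≥ t s))`. -/
theorem kaplan_meier_product {Ω : Type*} [MeasurableSpace Ω] (μ : Measure Ω)
    [IsProbabilityMeasure μ] (T : Ω → ℝ) (hT : Measurable T)
    (g : ℕ) (t : ℕ → ℝ)
    (hmono : ∀ s, 1 ≤ s → s ≤ g → t s < t (s + 1))
    (h1 : μ {ω | t 1 ≤ T ω} = 1)
    (hpos : ∀ s, 1 ≤ s → s ≤ g → 0 < (μ {ω | t s ≤ T ω}).toReal)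
    (hgap : ∀ s, 1 ≤ s → s ≤ g → μ {ω | t s < T ω ∧ T ω < t (s + 1)} = 0) :
    (μ {ω | t (g + 1) ≤ T ω}).toReal =
      ∏ s ∈ Finset.Icc 1 g,
        (1 - (μ {ω | T ω = t s}).toReal / (μ {ω | t s ≤ T ω}).toReal) :=
  kaplan_meier_product_general μ T hT g t hmono h1 hpos hgap
end

section
/- For every t ∈ ℝ with ℙ(C ≥ t) > 0 and E[1_{T ≥ t}·W] ≠ 0, the weighted discrete hazard computed from the censored observations equals the weighted discrete hazard of the true survival time: E[1_{Y = t}·Δ·W] / E[1_{Y ≥ t}·W] = E[1_{T = t}·W] / E[1_{T ≥ t}·W]. -/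
open MeasureTheory ProbabilityTheory

/-!
Censoring enters both integrands only through the factor `1_{t ≤ C}`: on `{Y = t, Δ = 1}` one
has `T = t ≤ C`, and `t ≤ Y` means `t ≤ T` and `t ≤ C`. Since `C` is independent of `(T, W)`,
each integral factors as the uncensored one times `ℙ(C ≥ t)`, which cancels in the ratio.
-/

section IndepFactor

variable {Ω α : Type*} [MeasurableSpace Ω] [MeasurableSpace α] {μ : Measure Ω}
  {X : Ω → α} {C : Ω → ℝ} {s : Set ℝ}

lemma integral_mul_indicator_of_indepFun (hX : Measurable X) (hC : Measurable C)
    (hXC : IndepFun X C μ) (hs : MeasurableSet s) {f : α → ℝ} (hf : Measurable f) :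
    ∫ ω, f (X ω) * s.indicator 1 (C ω) ∂μ = (∫ ω, f (X ω) ∂μ) * μ.real (C ⁻¹' s) := by
  have hind : Measurable (s.indicator (1 : ℝ → ℝ)) := measurable_one.indicator hs
  calc ∫ ω, f (X ω) * s.indicator 1 (C ω) ∂μ
      = (∫ ω, f (X ω) ∂μ) * ∫ ω, s.indicator 1 (C ω) ∂μ :=
        (hXC.comp hf hind).integral_fun_mul_eq_mul_integral (hf.comp hX).aestronglyMeasurable
          (hind.comp hC).aestronglyMeasurable
    _ = (∫ ω, f (X ω) ∂μ) * μ.real (C ⁻¹' s) := by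
        rw [← integral_indicator_one (hC hs)]
        rfl

lemma integral_mul_indicator_div_of_indepFun (hX : Measurable X) (hC : Measurable C)
    (hXC : IndepFun X C μ) (hs : MeasurableSet s) (hCs : μ.real (C ⁻¹' s) ≠ 0)
    {f g : α → ℝ} (hf : Measurable f) (hg : Measurable g) :
    (∫ ω, f (X ω) * s.indicator 1 (C ω) ∂μ) / (∫ ω, g (X ω) * s.indicator 1 (C ω) ∂μ)
      = (∫ ω, f (X ω) ∂μ) / (∫ ω, g (X ω) ∂μ) := by
  rw [integral_mul_indicator_of_indepFun hX hC hXC hs hf,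
    integral_mul_indicator_of_indepFun hX hC hXC hs hg, mul_div_mul_right _ _ hCs]

end IndepFactor

lemma indicator_singleton_min_mul_indicator_Iic (T C t : ℝ) :
    ({t} : Set ℝ).indicator (1 : ℝ → ℝ) (min T C) * (Set.Iic C).indicator 1 T
      = ({t} : Set ℝ).indicator 1 T * (Set.Ici t).indicator 1 C := by
  simp only [Set.indicator_apply, Set.mem_singleton_iff, Set.mem_Iic, Set.mem_Ici, Pi.one_apply]
  split_ifs <;> grind

lemma indicator_Ici_min (T C t : ℝ) :
    (Set.Ici t).indicator (1 : ℝ → ℝ) (min T C)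
      = (Set.Ici t).indicator 1 T * (Set.Ici t).indicator 1 C := by
  simp only [Set.indicator_apply, Set.mem_Ici, le_min_iff, Pi.one_apply]
  split_ifs <;> simp_all

theorem censored_hazard_eq_general {Ω : Type*} [MeasurableSpace Ω] (μ : Measure Ω)
    (T C W : Ω → ℝ)
    (hT : Measurable T) (hC : Measurable C) (hW : Measurable W)
    (hindep : ProbabilityTheory.IndepFun (fun ω => (T ω, W ω)) C μ)
    (t : ℝ) (hCpos : 0 < (μ {ω | t ≤ C ω}).toReal) :
    (∫ ω, {ω' | min (T ω') (C ω') = t}.indicator (fun _ => (1 : ℝ)) ω *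
        {ω' | T ω' ≤ C ω'}.indicator (fun _ => (1 : ℝ)) ω * W ω ∂μ) /
      (∫ ω, {ω' | t ≤ min (T ω') (C ω')}.indicator (fun _ => (1 : ℝ)) ω * W ω ∂μ)
      = (∫ ω, {ω' | T ω' = t}.indicator (fun _ => (1 : ℝ)) ω * W ω ∂μ) /
        (∫ ω, {ω' | t ≤ T ω'}.indicator (fun _ => (1 : ℝ)) ω * W ω ∂μ) := by
  have hf (A : Set ℝ) (hA : MeasurableSet A) :
      Measurable fun p : ℝ × ℝ => A.indicator 1 p.1 * p.2 :=
    ((measurable_one.indicator hA).comp measurable_fst).mul measurable_snd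
  have hfactor := integral_mul_indicator_div_of_indepFun (hT.prodMk hW) hC hindep
    (measurableSet_Ici (a := t)) hCpos.ne' (hf _ (measurableSet_singleton t))
    (hf _ (measurableSet_Ici (a := t)))
  convert hfactor using 3 <;> funext ω
  · calc _ = ({t} : Set ℝ).indicator 1 (min (T ω) (C ω)) * (Set.Iic (C ω)).indicator 1 (T ω)
            * W ω := rfl
      _ = _ := by rw [indicator_singleton_min_mul_indicator_Iic]; ring
  · calc _ = (Set.Ici t).indicator 1 (min (T ω) (C ω)) * W ω := rfl
      _ = _ := by rw [indicator_Ici_min]; ring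
  · rfl
  · rfl

/-- Under non-informative censoring (`C` independent of `(T, W)`), with `Y = min(T, C)`
and `Δ = 1_{T ≤ C}`, if `ℙ(C ≥ t) > 0` and `E[1_{T ≥ t}·W] ≠ 0`, then the weighted
discrete hazard from censored observations equals that of the true survival time:
`E[1_{Y = t}·Δ·W] / E[1_{Y ≥ t}·W] = E[1_{T = t}·W] / E[1_{T ≥ t}·W]`. -/
theorem censored_hazard_eq {Ω : Type*} [MeasurableSpace Ω] (μ : Measure Ω)
    [IsProbabilityMeasure μ] (T C W : Ω → ℝ)
    (hT : Measurable T) (hC : Measurable C) (hW : Measurable W)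
    (hWb : ∃ M, ∀ ω, |W ω| ≤ M)
    (hindep : ProbabilityTheory.IndepFun (fun ω => (T ω, W ω)) C μ)
    (t : ℝ) (hCpos : 0 < (μ {ω | t ≤ C ω}).toReal)
    (hTW : ∫ ω, {ω' | t ≤ T ω'}.indicator (fun _ => (1 : ℝ)) ω * W ω ∂μ ≠ 0) :
    (∫ ω, {ω' | min (T ω') (C ω') = t}.indicator (fun _ => (1 : ℝ)) ω *
        {ω' | T ω' ≤ C ω'}.indicator (fun _ => (1 : ℝ)) ω * W ω ∂μ) /
      (∫ ω, {ω' | t ≤ min (T ω') (C ω')}.indicator (fun _ => (1 : ℝ)) ω * W ω ∂μ)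
      = (∫ ω, {ω' | T ω' = t}.indicator (fun _ => (1 : ℝ)) ω * W ω ∂μ) /
        (∫ ω, {ω' | t ≤ T ω'}.indicator (fun _ => (1 : ℝ)) ω * W ω ∂μ) :=
  censored_hazard_eq_general μ T C W hT hC hW hindep t hCpos
end
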